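/- Suppose E ≥ 2, L > 0, and 0 < η_l ≤ 1/(√8·E·L). Let F : ℝ^d → ℝ be differentiable with L-Lipschitz gradient, and consider the deterministic local-SGD-type iteration w^{(i)} = w^{(i-1)} − η_l ∇F(w^{(i-1)}) starting from w^{(0)} = w. Then ‖w^{(E)} − w‖² ≤ 12·η_l²·E²·‖∇F(w)‖². -/
import Mathlib


theorem stmt_15 (d : ℕ) (E : ℕ) (hE : 2 ≤ E) (L ηl : ℝ) (hL : 0 < L)
    (hηl : 0 < ηl) (hηle : ηl ≤ 1 / (Real.sqrt 8 * E * L))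
    (F : EuclideanSpace ℝ (Fin d) → ℝ) (hF : Differentiable ℝ F)
    (hLip : ∀ x y, ‖gradient F x - gradient F y‖ ≤ L * ‖x - y‖)
    (w : ℕ → EuclideanSpace ℝ (Fin d))
    (hiter : ∀ i : ℕ, w (i + 1) = w i - ηl • gradient F (w i)) :
    ‖w E - w 0‖ ^ 2 ≤ 12 * ηl ^ 2 * (E : ℝ) ^ 2 * ‖gradient F (w 0)‖ ^ 2 := by
  set g : ℝ := ‖gradient F (w 0)‖ with hg
  set c : ℝ := ηl * L with hc
  have hg0 : 0 ≤ g := norm_nonneg _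
  have hc0 : 0 ≤ c := le_of_lt (mul_pos hηl hL)
  have hEpos : (0:ℝ) < E := by positivity
  have hs8 : (1:ℝ) ≤ Real.sqrt 8 := by
    rw [show (1:ℝ) = Real.sqrt 1 by simp]
    exact Real.sqrt_le_sqrt (by norm_num)
  have hcE : c * E ≤ 1 := by
    have hden : (0:ℝ) < Real.sqrt 8 * E * L := by positivity
    have := (le_div_iff₀ hden).mp hηle
    calc c * E = ηl * (Real.sqrt 8 * E * L) / Real.sqrt 8 := by
          field_simp [hc]; ring
      _ ≤ 1 / Real.sqrt 8 := by
          apply div_le_div_of_nonneg_right _ (by positivity)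
          nlinarith
      _ ≤ 1 := by
          rw [div_le_one (by positivity)]; exact hs8
  -- inductive drift bound
  have key : ∀ i : ℕ, ‖w i - w 0‖ ≤ ηl * g * i * (1 + c) ^ i := by
    intro i
    induction i with
    | zero => simp
    | succ n ih =>
      have hgrad : ‖gradient F (w n)‖ ≤ g + L * ‖w n - w 0‖ := by
        have h1 := hLip (w n) (w 0)
        calc ‖gradient F (w n)‖ = ‖(gradient F (w n) - gradient F (w 0)) + gradient F (w 0)‖ := by
              rw [sub_add_cancel]
          _ ≤ ‖gradient F (w n) - gradient F (w 0)‖ + g := norm_add_le _ _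
          _ ≤ L * ‖w n - w 0‖ + g := by linarith
          _ = g + L * ‖w n - w 0‖ := by ring
      have hstep : ‖w (n+1) - w 0‖ ≤ (1 + c) * ‖w n - w 0‖ + ηl * g := by
        have : w (n+1) - w 0 = (w n - w 0) - ηl • gradient F (w n) := by
          rw [hiter n]; abel
        calc ‖w (n+1) - w 0‖ = ‖(w n - w 0) - ηl • gradient F (w n)‖ := by rw [this]
          _ ≤ ‖w n - w 0‖ + ‖ηl • gradient F (w n)‖ := norm_sub_le _ _
          _ = ‖w n - w 0‖ + ηl * ‖gradient F (w n)‖ := by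
              rw [norm_smul, Real.norm_eq_abs, abs_of_pos hηl]
          _ ≤ ‖w n - w 0‖ + ηl * (g + L * ‖w n - w 0‖) := by
              have := mul_le_mul_of_nonneg_left hgrad (le_of_lt hηl)
              linarith
          _ = (1 + c) * ‖w n - w 0‖ + ηl * g := by rw [hc]; ring
      have hpow1 : (1:ℝ) ≤ (1 + c) ^ (n+1) := one_le_pow₀ (by linarith)
      calc ‖w (n+1) - w 0‖ ≤ (1 + c) * ‖w n - w 0‖ + ηl * g := hstep
        _ ≤ (1 + c) * (ηl * g * n * (1 + c) ^ n) + ηl * g := by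
            have := mul_le_mul_of_nonneg_left ih (by linarith : (0:ℝ) ≤ 1 + c)
            linarith
        _ ≤ ηl * g * ((n:ℝ)+1) * (1 + c) ^ (n+1) := by
            have h1 : (1 + c) * (ηl * g * n * (1 + c) ^ n) = ηl * g * n * (1 + c) ^ (n+1) := by ring
            rw [h1]
            nlinarith [mul_nonneg (mul_nonneg hηl.le hg0) (Nat.cast_nonneg n : (0:ℝ) ≤ n),
              mul_nonneg hηl.le hg0]
        _ = ηl * g * ((n+1 : ℕ):ℝ) * (1 + c) ^ (n+1) := by push_cast; ring
    -- end induction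
  have hpowE : (1 + c) ^ E ≤ 3 := by
    have h1 : (1 + c) ^ E ≤ Real.exp c ^ E :=
      by rw [add_comm]; exact pow_le_pow_left₀ (by linarith) (Real.add_one_le_exp c) E
    have h2 : Real.exp c ^ E = Real.exp (c * E) := by
      rw [← Real.exp_nat_mul]; ring_nf
    have h3 : Real.exp (c * E) ≤ Real.exp 1 := Real.exp_le_exp.mpr hcE
    have h4 : Real.exp 1 ≤ 3 := by
      have := Real.exp_one_lt_d9
      linarith
    calc (1 + c) ^ E ≤ Real.exp c ^ E := h1
      _ = Real.exp (c * E) := h2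
      _ ≤ 3 := le_trans h3 h4
  have hfinal : ‖w E - w 0‖ ≤ ηl * g * E * 3 := by
    calc ‖w E - w 0‖ ≤ ηl * g * E * (1 + c) ^ E := key E
      _ ≤ ηl * g * E * 3 := by
          apply mul_le_mul_of_nonneg_left hpowE
          positivity
  have hnn : (0:ℝ) ≤ ηl * g * E * 3 := by positivity
  nlinarith [norm_nonneg (w E - w 0), sq_nonneg (ηl * g * E)]
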